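/- arXiv:math/0005301 — 10 statements merged into one kernel-verified Lean document; each statement's English description precedes it below -/
import Mathlib

section
/- Let G be a finite nonabelian group and let g₀, g₁ be two noncentral elements of G. Then there exists an element w of G that commutes with neither g₀ nor g₁. (Consequently, any two vertices of BNC(G) can be joined by an edge path involving at most two edges, so BNC(G) is path-connected.) -/
/-- Path-connectivity step for `BNC(G)`: in a finite nonabelian group, for any two
noncentral elements `g₀, g₁` there is an element `w` commuting with neither. -/
theorem stmt_0 {G : Type*} [Group G] [Finite G]
    (hna : ∃ a b : G, a * b ≠ b * a)
    (g₀ g₁ : G) (h₀ : g₀ ∉ Subgroup.center G) (h₁ : g₁ ∉ Subgroup.center G) :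
    ∃ w : G, w * g₀ ≠ g₀ * w ∧ w * g₁ ≠ g₁ * w := by
  rw [Subgroup.mem_center_iff] at h₀ h₁
  push_neg at h₀ h₁
  obtain ⟨x, hx⟩ := h₀
  obtain ⟨y, hy⟩ := h₁
  have hx' : ¬ Commute x g₀ := hx
  have hy' : ¬ Commute y g₁ := hy
  by_cases hx1 : Commute x g₁
  · by_cases hy0 : Commute y g₀
    · refine ⟨x * y, ?_, ?_⟩
      · intro h
        have h' : Commute (x * y) g₀ := h
        exact hx' (by simpa using h'.mul_left hy0.inv_left)
      · intro h
        have h' : Commute (x * y) g₁ := h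
        exact hy' (by simpa using hx1.inv_left.mul_left h')
    · exact ⟨y, hy0, hy⟩
  · exact ⟨x, hx, hx1⟩
end

section
/- Let G be a finite group, let a be a nontrivial element of the center Z(G), and let S be a nonempty finite set of pairwise non-commuting noncentral elements of G. Then the image of S under left multiplication by a is different from S. (Hence Z(G) acts freely by left multiplication on the faces of BNC(G).) -/
/-- A nontrivial central element `a` moves every face of `BNC(G)` under left
multiplication: the image of a nonempty pairwise non-commuting set of noncentral
elements under `g ↦ a * g` differs from the set. -/
theorem stmt_2 {G : Type*} [Group G] [Fintype G] [DecidableEq G]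
    (a : G) (ha : a ∈ Subgroup.center G) (ha1 : a ≠ 1)
    (S : Finset G) (hne : S.Nonempty)
    (hncen : ∀ x ∈ S, x ∉ Subgroup.center G)
    (hpair : ∀ x ∈ S, ∀ y ∈ S, x ≠ y → x * y ≠ y * x) :
    S.image (fun g => a * g) ≠ S := by
  intro h
  obtain ⟨x, hx⟩ := hne
  have hax : a * x ∈ S := by
    rw [← h]; exact Finset.mem_image_of_mem _ hx
  have hne' : a * x ≠ x := by
    intro hc
    exact ha1 (mul_right_cancel (by rw [hc, one_mul]) : a = 1)
  exact hpair (a * x) hax x hx hne' (by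
    simp [mul_assoc, ← Subgroup.mem_center_iff.mp ha x])
end

section
/- Let G be a finite group. Then |Z(G)| divides the Euler characteristic χ(BNC(G)) = ∑_F (-1)^{|F|+1}, where the sum ranges over all nonempty finite sets F of pairwise non-commuting noncentral elements of G. -/
/-!
The center `Z(G)` acts on `Finset G` by left translation. This action preserves the faces of
`BNC(G)` and their cardinalities, and it is free on faces: if `z • F = F` with `x ∈ F`, then
`z * x ∈ F` commutes with `x`, so `z * x = x`. Hence the faces split into orbits of size `|Z(G)|`,
on each of which the summand `(-1) ^ (|F| + 1)` is constant.
-/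

attribute [local instance] Classical.propDecidable

open MulAction Pointwise

theorem MulAction.natCard_dvd_sum_of_stabilizer_eq_bot {G X R : Type*} [Group G] [Fintype G]
    [MulAction G X] [Fintype X] [CommSemiring R] (hfree : ∀ x : X, stabilizer G x = ⊥)
    (f : X → R) (hf : ∀ (g : G) (x : X), f (g • x) = f x) :
    (Nat.card G : R) ∣ ∑ x, f x := by
  classical
  rw [← (selfEquivOrbitsQuotientProd hfree).symm.sum_comp, Fintype.sum_prod_type]
  refine Finset.dvd_sum fun ω _ => ?_
  have hconst (g : G) : f ((selfEquivOrbitsQuotientProd hfree).symm (ω, g)) = f ω.out :=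
    hf g ω.out
  simp only [hconst, Finset.sum_const, Finset.card_univ, nsmul_eq_mul, Nat.card_eq_fintype_card]
  exact dvd_mul_right _ _

lemma Subgroup.commute_mul_left_of_mem_center {G : Type*} [Group G] {z : G}
    (hz : z ∈ center G) (x : G) : Commute (z * x) x :=
  Commute.mul_left (mem_center_iff.mp hz x).symm (Commute.refl x)

open Subgroup

def bncFaces (G : Type*) [Group G] : SubMulAction (center G) (Finset G) where
  carrier := {F | F.Nonempty ∧ (∀ x ∈ F, x ∉ center G) ∧
    ∀ x ∈ F, ∀ y ∈ F, x ≠ y → x * y ≠ y * x}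
  smul_mem' := by
    rintro ⟨z, hz⟩ F ⟨hne, hnc, hcomm⟩
    simp only [Set.mem_ofPred_eq, Finset.mem_smul_finset, Subgroup.smul_def, smul_eq_mul]
    refine ⟨hne.smul_finset, ?_, ?_⟩
    · rintro _ ⟨x, hx, rfl⟩ hzx
      exact hnc x hx (by simpa using mul_mem (inv_mem hz) hzx)
    · rintro _ ⟨x, hx, rfl⟩ _ ⟨y, hy, rfl⟩ hxy h
      refine hcomm x hx y hy (fun hxy' => hxy (by rw [hxy'])) (mul_left_cancel (a := z * z) ?_)
      have hzc := mem_center_iff.mp hz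
      have hzz (a b : G) : z * a * (z * b) = z * z * (a * b) := by
        rw [mul_assoc z a, ← mul_assoc a, hzc a, mul_assoc, mul_assoc]
      rw [← hzz, ← hzz, h]

lemma stabilizer_bncFaces_eq_bot {G : Type*} [Group G] (F : bncFaces G) :
    stabilizer (center G) F = ⊥ := by
  obtain ⟨F, ⟨x, hx⟩, -, hcomm⟩ := F
  refine (Subgroup.eq_bot_iff_forall _).mpr fun ⟨z, hz⟩ hfix => ?_
  have hfix : (⟨z, hz⟩ : center G) • F = F := congrArg Subtype.val hfix
  have hzx : z * x ∈ F := by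
    rw [← hfix]
    exact Finset.smul_mem_smul_finset hx
  by_contra hz1
  refine hcomm _ hzx x hx (fun h => hz1 ?_) (commute_mul_left_of_mem_center hz x)
  exact Subtype.ext (mul_eq_right.mp h)

/-- The order of the center divides the Euler characteristic of `BNC(G)`,
computed as `∑_F (-1)^(|F|+1)` over all nonempty finite sets `F` of pairwise
non-commuting noncentral elements of `G`. -/
theorem stmt_3 {G : Type*} [Group G] [Fintype G] :
    (Nat.card (Subgroup.center G) : ℤ) ∣
      ∑ F ∈ Finset.univ.filter (fun F : Finset G =>
          F.Nonempty ∧ (∀ x ∈ F, x ∉ Subgroup.center G) ∧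
          ∀ x ∈ F, ∀ y ∈ F, x ≠ y → x * y ≠ y * x),
        (-1 : ℤ) ^ (F.card + 1) := by
  rw [Finset.sum_subtype (p := (· ∈ bncFaces G)) _ fun _ => by rw [Finset.mem_filter_univ]; rfl]
  refine natCard_dvd_sum_of_stabilizer_eq_bot stabilizer_bncFaces_eq_bot _ fun z F => ?_
  rw [SubMulAction.val_smul, Finset.card_smul_finset]
end

section
/- Let G be a group and let S be a finite set of nontrivial pairwise non-commuting elements of G such that S is equal to the set of inverses of its elements. Then every element of S has order 2. Consequently, in a finite group of odd order, the inversion map g ↦ g^{-1} fixes no nonempty finite set of nontrivial pairwise non-commuting elements. -/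
/-- If a finite set of nontrivial pairwise non-commuting elements of a group is
closed under taking inverses, then all its elements have order 2.  Consequently,
in a finite group of odd order, inversion fixes no nonempty finite set of
nontrivial pairwise non-commuting elements. -/
theorem stmt_4 {G : Type*} [Group G] [DecidableEq G] :
    (∀ S : Finset G, (∀ x ∈ S, x ≠ 1) →
      (∀ x ∈ S, ∀ y ∈ S, x ≠ y → x * y ≠ y * x) →
      S.image (fun x => x⁻¹) = S →
      ∀ x ∈ S, orderOf x = 2) ∧
    (Finite G → Odd (Nat.card G) →
      ∀ S : Finset G, S.Nonempty → (∀ x ∈ S, x ≠ 1) →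
      (∀ x ∈ S, ∀ y ∈ S, x ≠ y → x * y ≠ y * x) →
      S.image (fun x => x⁻¹) ≠ S) := by
  have main : ∀ S : Finset G, (∀ x ∈ S, x ≠ 1) →
      (∀ x ∈ S, ∀ y ∈ S, x ≠ y → x * y ≠ y * x) →
      S.image (fun x => x⁻¹) = S → ∀ x ∈ S, orderOf x = 2 := by
    intro S h1 h2 h3 x hx
    have hinv : x⁻¹ ∈ S := by
      rw [← h3]
      exact Finset.mem_image_of_mem _ hx
    have hxx : x = x⁻¹ := by
      by_contra hne
      exact h2 x hx x⁻¹ hinv hne (by group)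
    have hsq : x ^ 2 = 1 := by
      rw [pow_two]
      nth_rewrite 2 [hxx]
      simp
    exact orderOf_eq_prime hsq (h1 x hx)
  refine ⟨main, ?_⟩
  intro _ hodd S hne h1 h2 heq
  obtain ⟨x, hx⟩ := hne
  have h2' := main S h1 h2 heq x hx
  have hdvd : orderOf x ∣ Nat.card G := orderOf_dvd_natCard x
  rw [h2'] at hdvd
  rw [Nat.odd_iff] at hodd
  omega
end

section
/- Let G be a finite group of odd order. Then the Euler characteristic χ(NC(G)) = ∑_F (-1)^{|F|+1} is even, where the sum ranges over all nonempty finite sets F of pairwise non-commuting nontrivial elements of G. The same holds for the sum restricted to sets of noncentral elements (i.e., χ(BNC(G)) is even). -/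
attribute [local instance] Classical.propDecidable

/-- If a finite family of finite sets of group elements is closed under elementwise
inversion and has no member fixed by inversion, the alternating sum is even. -/
lemma stmt_5_pair {G : Type*} [Group G] (s : Finset (Finset G))
    (hmem : ∀ F ∈ s, F.image (·⁻¹) ∈ s)
    (hne : ∀ F ∈ s, F.image (·⁻¹) ≠ F) :
    Even (∑ F ∈ s, (-1 : ℤ) ^ (F.card + 1)) := by
  rw [even_iff_two_dvd, show (2 : ℤ) = ((2 : ℕ) : ℤ) by norm_num,
    ← ZMod.intCast_zmod_eq_zero_iff_dvd]
  push_cast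
  refine Finset.sum_involution (fun F _ => F.image (·⁻¹)) ?_ ?_ hmem ?_
  · intro F _
    have hcard : (F.image (·⁻¹)).card = F.card :=
      Finset.card_image_of_injective _ (fun a b h => inv_injective h)
    rw [hcard]
    exact CharTwo.add_self_eq_zero _
  · intro F hF _
    exact hne F hF
  · intro F _
    ext x
    simp only [Finset.mem_image]
    constructor
    · rintro ⟨a, ⟨b, hb, rfl⟩, rfl⟩
      simpa using hb
    · intro hx
      exact ⟨x⁻¹, ⟨x, hx, rfl⟩, inv_inv x⟩

lemma stmt_5_sq {G : Type*} [Group G] [Fintype G] (hodd : Odd (Fintype.card G))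
    {x : G} (hx : x * x = 1) : x = 1 := by
  have h2 : orderOf x ∣ 2 := orderOf_dvd_iff_pow_eq_one.2 (by rw [pow_two]; exact hx)
  have hc : orderOf x ∣ Fintype.card G := orderOf_dvd_card
  have hd : orderOf x ∣ Nat.gcd 2 (Fintype.card G) := Nat.dvd_gcd h2 hc
  have hg : Nat.gcd 2 (Fintype.card G) = 1 := by
    rcases Nat.Prime.eq_one_or_self_of_dvd Nat.prime_two _ (Nat.gcd_dvd_left 2 _) with h | h
    · exact h
    · exact absurd (even_iff_two_dvd.2 (h ▸ Nat.gcd_dvd_right 2 (Fintype.card G)))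
        (Nat.not_even_iff_odd.2 hodd)
  rw [hg, Nat.dvd_one] at hd
  exact orderOf_eq_one_iff.1 hd

/-- For a finite group of odd order, the Euler characteristics of `NC(G)` and of
`BNC(G)` (computed as `∑_F (-1)^(|F|+1)` over the respective faces) are even. -/
theorem stmt_5 {G : Type*} [Group G] [Fintype G] (hodd : Odd (Fintype.card G)) :
    Even (∑ F ∈ Finset.univ.filter (fun F : Finset G =>
        F.Nonempty ∧ (∀ x ∈ F, x ≠ 1) ∧
        ∀ x ∈ F, ∀ y ∈ F, x ≠ y → x * y ≠ y * x),
      (-1 : ℤ) ^ (F.card + 1)) ∧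
    Even (∑ F ∈ Finset.univ.filter (fun F : Finset G =>
        F.Nonempty ∧ (∀ x ∈ F, x ∉ Subgroup.center G) ∧
        ∀ x ∈ F, ∀ y ∈ F, x ≠ y → x * y ≠ y * x),
      (-1 : ℤ) ^ (F.card + 1)) := by
  have hanti : ∀ (F : Finset G), (∀ x ∈ F, ∀ y ∈ F, x ≠ y → x * y ≠ y * x) →
      (∀ x ∈ F.image (·⁻¹), ∀ y ∈ F.image (·⁻¹), x ≠ y → x * y ≠ y * x) := by
    intro F hnc x hx y hy hxy heq
    obtain ⟨a, ha, rfl⟩ := Finset.mem_image.1 hx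
    obtain ⟨b, hb, rfl⟩ := Finset.mem_image.1 hy
    apply hnc b hb a ha (fun h => hxy (by rw [h]))
    have := congrArg (·⁻¹) heq
    simpa [mul_inv_rev] using this
  have hfix : ∀ (F : Finset G), F.Nonempty → (∀ x ∈ F, x ≠ 1) →
      (∀ x ∈ F, ∀ y ∈ F, x ≠ y → x * y ≠ y * x) → F.image (·⁻¹) ≠ F := by
    intro F hne h1 hnc heq
    obtain ⟨x, hx⟩ := hne
    have hxinv : x⁻¹ ∈ F := heq ▸ Finset.mem_image_of_mem _ hx
    by_cases hxx : x⁻¹ = x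
    · exact h1 x hx (stmt_5_sq hodd (by nth_rewrite 1 [← hxx]; exact inv_mul_cancel x))
    · exact hnc x hx x⁻¹ hxinv (Ne.symm hxx) (by rw [mul_inv_cancel, inv_mul_cancel])
  constructor
  · refine stmt_5_pair _ ?_ ?_
    · intro F hF
      rw [Finset.mem_filter] at hF ⊢
      obtain ⟨-, hne, h1, hnc⟩ := hF
      refine ⟨Finset.mem_univ _, hne.image _, ?_, hanti F hnc⟩
      intro x hx
      obtain ⟨a, ha, rfl⟩ := Finset.mem_image.1 hx
      simpa using h1 a ha
    · intro F hF
      rw [Finset.mem_filter] at hF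
      exact hfix F hF.2.1 hF.2.2.1 hF.2.2.2
  · refine stmt_5_pair _ ?_ ?_
    · intro F hF
      rw [Finset.mem_filter] at hF ⊢
      obtain ⟨-, hne, h1, hnc⟩ := hF
      refine ⟨Finset.mem_univ _, hne.image _, ?_, hanti F hnc⟩
      intro x hx
      obtain ⟨a, ha, rfl⟩ := Finset.mem_image.1 hx
      exact fun h => h1 a ha (by simpa using (Subgroup.center G).inv_mem h)
    · intro F hF
      rw [Finset.mem_filter] at hF
      refine hfix F hF.2.1 (fun x hx h => hF.2.2.1 x hx (h ▸ (Subgroup.center G).one_mem))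
        hF.2.2.2
end

section
/- Let G be a finite nonabelian group containing a self-centralizing involution, i.e., an element x of order 2 whose centralizer in G is {1, x}. Then the center of G is trivial, and x fails to commute with every nontrivial element y ≠ x of G; consequently every nonempty finite set of nontrivial pairwise non-commuting elements not containing x remains pairwise non-commuting after adjoining x (so NC(G) = BNC(G) is a cone with apex x, hence contractible). -/
/-- If a finite nonabelian group has a self-centralizing involution `x`
(`C(x) = {1, x}`), then the center is trivial, `x` commutes with no nontrivial
element other than itself, and adjoining `x` to any nonempty pairwise
non-commuting set of nontrivial elements not containing `x` again yields a
pairwise non-commuting set (so `NC(G) = BNC(G)` is a cone with apex `x`). -/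
theorem stmt_7 {G : Type*} [Group G] [Finite G] [DecidableEq G]
    (hna : ∃ a b : G, a * b ≠ b * a)
    (x : G) (hx : orderOf x = 2)
    (hself : (Subgroup.centralizer {x} : Set G) = {1, x}) :
    Subgroup.center G = ⊥ ∧
    (∀ y : G, y ≠ 1 → y ≠ x → y * x ≠ x * y) ∧
    (∀ S : Finset G, S.Nonempty → (∀ a ∈ S, a ≠ 1) →
      (∀ a ∈ S, ∀ b ∈ S, a ≠ b → a * b ≠ b * a) → x ∉ S →
      ∀ a ∈ insert x S, ∀ b ∈ insert x S, a ≠ b → a * b ≠ b * a) := by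
  have hx1 : x ≠ 1 := by
    intro h; rw [h, orderOf_one] at hx; omega
  -- key: anything commuting with x is 1 or x
  have key : ∀ y : G, y * x = x * y → y = 1 ∨ y = x := by
    intro y hy
    have : y ∈ (Subgroup.centralizer {x} : Set G) := by
      intro g hg
      simp only [Set.mem_singleton_iff] at hg
      subst hg
      exact hy.symm
    rw [hself] at this
    simpa using this
  have hkey2 : ∀ y : G, y ≠ 1 → y ≠ x → y * x ≠ x * y := by
    intro y h1 h2 hc
    rcases key y hc with h | h <;> [exact h1 h; exact h2 h]
  refine ⟨?_, hkey2, ?_⟩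
  · -- center trivial
    rw [Subgroup.eq_bot_iff_forall]
    intro z hz
    have hz' := Subgroup.mem_center_iff.mp hz
    rcases key z (hz' x).symm with h | h
    · exact h
    · -- z = x central implies all commute with x, so G ⊆ {1, x}, abelian
      exfalso
      obtain ⟨a, b, hab⟩ := hna
      have ha : a = 1 ∨ a = x := key a (h ▸ hz' a)
      have hb : b = 1 ∨ b = x := key b (h ▸ hz' b)
      rcases ha with rfl | rfl <;> rcases hb with rfl | rfl <;> simp at hab
  · intro S hS h1 hpair hxS a ha b hb hab
    simp only [Finset.mem_insert] at ha hb
    rcases ha with rfl | ha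
    · rcases hb with rfl | hb
      · exact absurd rfl hab
      · intro hc
        exact hkey2 b (h1 b hb) (fun h => hxS (h ▸ hb)) hc.symm
    · rcases hb with rfl | hb
      · intro hc
        exact hkey2 a (h1 a ha) (fun h => hxS (h ▸ ha)) hc
      · exact hpair a ha b hb hab
end

section
/- Let G be a finite group. Then χ(NC(G)) ≡ χ(NC_2(G)) (mod 2), where χ(NC(G)) = ∑_F (-1)^{|F|+1} with F ranging over nonempty finite sets of pairwise non-commuting nontrivial elements of G, and χ(NC_2(G)) is the analogous sum with F ranging over nonempty finite sets of pairwise non-commuting elements of order 2. -/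
attribute [local instance] Classical.propDecidable

/-- If `t ⊆ s` and `s \ t` carries a fixed-point-free involution, then
`s.card ≡ t.card` in `ZMod 2`. -/
lemma aux_card_eq_mod_two {α : Type*} [DecidableEq α] (s t : Finset α) (hsub : t ⊆ s)
    (i : α → α) (hmem : ∀ a ∈ s \ t, i a ∈ s \ t)
    (hinv : ∀ a ∈ s \ t, i (i a) = a)
    (hne : ∀ a ∈ s \ t, i a ≠ a) :
    ((s.card : ZMod 2)) = t.card := by
  have h0 : ∑ _a ∈ s \ t, (1 : ZMod 2) = 0 :=
    Finset.sum_involution (fun a _ => i a)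
      (fun a ha => by decide)
      (fun a ha _ => hne a ha)
      (fun a ha => hmem a ha)
      (fun a ha => hinv a ha)
  have hcard : ((s \ t).card : ZMod 2) = 0 := by
    simpa using h0
  have := Finset.card_sdiff_add_card_eq_card hsub
  calc (s.card : ZMod 2) = (((s \ t).card + t.card : ℕ) : ZMod 2) := by rw [this]
    _ = ((s \ t).card : ZMod 2) + t.card := by push_cast; ring
    _ = t.card := by rw [hcard, zero_add]

/-- The Euler characteristics of `NC(G)` and `NC_2(G)` agree mod 2. -/
theorem stmt_8 {G : Type*} [Group G] [Fintype G] :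
    (∑ F ∈ Finset.univ.filter (fun F : Finset G =>
        F.Nonempty ∧ (∀ x ∈ F, x ≠ 1) ∧
        ∀ x ∈ F, ∀ y ∈ F, x ≠ y → x * y ≠ y * x),
      (-1 : ℤ) ^ (F.card + 1)) ≡
    (∑ F ∈ Finset.univ.filter (fun F : Finset G =>
        F.Nonempty ∧ (∀ x ∈ F, orderOf x = 2) ∧
        ∀ x ∈ F, ∀ y ∈ F, x ≠ y → x * y ≠ y * x),
      (-1 : ℤ) ^ (F.card + 1)) [ZMOD 2] := by
  classical
  apply (ZMod.intCast_eq_intCast_iff _ _ 2).mp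
  push_cast
  have hneg : (-1 : ZMod 2) = 1 := by decide
  simp only [hneg, one_pow, Finset.sum_const, nsmul_eq_mul, mul_one]
  -- reduce to a statement about cardinalities
  set S1 := Finset.univ.filter (fun F : Finset G =>
        F.Nonempty ∧ (∀ x ∈ F, x ≠ 1) ∧
        ∀ x ∈ F, ∀ y ∈ F, x ≠ y → x * y ≠ y * x) with hS1
  set S2 := Finset.univ.filter (fun F : Finset G =>
        F.Nonempty ∧ (∀ x ∈ F, orderOf x = 2) ∧
        ∀ x ∈ F, ∀ y ∈ F, x ≠ y → x * y ≠ y * x) with hS2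
  have hmemS1 : ∀ F : Finset G, F ∈ S1 ↔
      (F.Nonempty ∧ (∀ x ∈ F, x ≠ 1) ∧
        ∀ x ∈ F, ∀ y ∈ F, x ≠ y → x * y ≠ y * x) := by
    intro F; simp [hS1]
  have hmemS2 : ∀ F : Finset G, F ∈ S2 ↔
      (F.Nonempty ∧ (∀ x ∈ F, orderOf x = 2) ∧
        ∀ x ∈ F, ∀ y ∈ F, x ≠ y → x * y ≠ y * x) := by
    intro F; simp [hS2]
  -- order two elements are exactly the self-inverse nontrivial ones
  have hord : ∀ x : G, x ≠ 1 → (orderOf x = 2 ↔ x⁻¹ = x) := by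
    intro x hx
    constructor
    · intro h
      have : x ^ 2 = 1 := by rw [← h]; exact pow_orderOf_eq_one x
      have hx2 : x * x = 1 := by rwa [pow_two] at this
      rw [inv_eq_iff_mul_eq_one]; exact hx2
    · intro h
      have hx2 : x ^ 2 = 1 := by
        have h2 := inv_mul_cancel x
        rw [h] at h2
        rw [pow_two]; exact h2
      exact orderOf_eq_prime hx2 hx
  have hsub : S2 ⊆ S1 := by
    intro F hF
    rw [hmemS2] at hF
    rw [hmemS1]
    refine ⟨hF.1, ?_, hF.2.2⟩
    intro x hx h1
    have := hF.2.1 x hx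
    rw [h1, orderOf_one] at this
    omega
  -- the involution
  set i : Finset G → Finset G := fun F => F.image (·⁻¹) with hi
  have hii : ∀ F : Finset G, i (i F) = F := by
    intro F
    simp [hi, Finset.image_image, Function.comp]
  have hi1 : ∀ F ∈ S1, i F ∈ S1 := by
    intro F hF
    rw [hmemS1] at hF ⊢
    obtain ⟨hne, h1, hcomm⟩ := hF
    refine ⟨hne.image _, ?_, ?_⟩
    · intro x hx
      simp only [hi, Finset.mem_image] at hx
      obtain ⟨y, hy, rfl⟩ := hx
      simpa using h1 y hy
    · intro x hx y hy hxy heq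
      simp only [hi, Finset.mem_image] at hx hy
      obtain ⟨a, ha, rfl⟩ := hx
      obtain ⟨b, hb, rfl⟩ := hy
      have hab : a ≠ b := fun h => hxy (by rw [h])
      apply hcomm a ha b hb hab
      have := congrArg (·⁻¹) heq
      simpa [mul_inv_rev] using this.symm
  -- fixed points characterization pieces
  have hmemdiff : ∀ F ∈ S1 \ S2, i F ∈ S1 \ S2 := by
    intro F hF
    rw [Finset.mem_sdiff] at hF ⊢
    obtain ⟨h1, h2⟩ := hF
    refine ⟨hi1 F h1, ?_⟩
    intro hiF2
    apply h2
    have hiF1 := hi1 F h1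
    have hsubF : i F ⊆ F := by
      intro x hx
      have hxne : x ≠ 1 := ((hmemS1 _).mp hiF1).2.1 x hx
      have hxx : x⁻¹ = x := (hord x hxne).mp (((hmemS2 _).mp hiF2).2.1 x hx)
      have hx' := hx
      simp only [hi, Finset.mem_image] at hx'
      obtain ⟨a, ha, rfl⟩ := hx'
      rw [← hxx, inv_inv]; exact ha
    have hcardeq : F.card ≤ (i F).card := by
      simp [hi, Finset.card_image_of_injective _ inv_injective]
    have heq : i F = F := Finset.eq_of_subset_of_card_le hsubF hcardeq
    rwa [heq] at hiF2
  have hnefix : ∀ F ∈ S1 \ S2, i F ≠ F := by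
    intro F hF heq
    rw [Finset.mem_sdiff] at hF
    obtain ⟨h1, h2⟩ := hF
    apply h2
    rw [hmemS2]
    rw [hmemS1] at h1
    obtain ⟨hne, hnt, hcomm⟩ := h1
    refine ⟨hne, ?_, hcomm⟩
    intro x hx
    rw [hord x (hnt x hx)]
    by_contra hxi
    -- x⁻¹ ≠ x, but x⁻¹ ∈ i F = F, and they commute
    have hxinv : x⁻¹ ∈ F := by
      rw [← heq, hi]
      exact Finset.mem_image_of_mem _ hx
    exact hcomm x hx x⁻¹ hxinv (fun h => hxi h.symm) (by group)
  have key := aux_card_eq_mod_two S1 S2 hsub i hmemdiff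
    (fun a ha => hii a) hnefix
  exact_mod_cast key
end

section
/- Let G be a finite Frobenius group with complement H and kernel K; that is, H is a proper nontrivial subgroup with H ∩ gHg^{-1} = 1 for all g ∈ G − H, and K is a normal subgroup of G whose underlying set equals G − ⋃_{g ∈ G}(gHg^{-1} − {1}). Then nc(G) = nc(K) + |K|·nc(H), where nc of a group is the maximum size of a set of nontrivial pairwise non-commuting elements. -/
/-- `nc G` is the maximum size of a set of nontrivial pairwise non-commuting
elements of `G`. -/
noncomputable def nc (G : Type*) [Group G] : ℕ :=
  sSup {n : ℕ | ∃ S : Finset G, S.card = n ∧ (∀ x ∈ S, x ≠ 1) ∧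
    ∀ x ∈ S, ∀ y ∈ S, x ≠ y → x * y ≠ y * x}

section Basics
variable {G : Type*} [Group G] [Finite G]

lemma nc_bddAbove : BddAbove {n : ℕ | ∃ S : Finset G, S.card = n ∧ (∀ x ∈ S, x ≠ 1) ∧
    ∀ x ∈ S, ∀ y ∈ S, x ≠ y → x * y ≠ y * x} := by
  have := Fintype.ofFinite G
  exact ⟨Fintype.card G, fun n hn => by obtain ⟨S, hS, -⟩ := hn; exact hS ▸ S.card_le_univ⟩

lemma card_le_nc (S : Finset G) (h1 : ∀ x ∈ S, x ≠ 1)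
    (hc : ∀ x ∈ S, ∀ y ∈ S, x ≠ y → x * y ≠ y * x) : S.card ≤ nc G :=
  le_csSup nc_bddAbove ⟨S, rfl, h1, hc⟩

lemma nc_exists : ∃ S : Finset G, S.card = nc G ∧ (∀ x ∈ S, x ≠ 1) ∧
    ∀ x ∈ S, ∀ y ∈ S, x ≠ y → x * y ≠ y * x := by
  have h := Nat.sSup_mem (s := {n : ℕ | ∃ S : Finset G, S.card = n ∧ (∀ x ∈ S, x ≠ 1) ∧
    ∀ x ∈ S, ∀ y ∈ S, x ≠ y → x * y ≠ y * x}) ⟨0, ⟨∅, by simp⟩⟩ nc_bddAbove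
  exact h

lemma card_le_nc_subgroup (L : Subgroup G) (S : Finset G) (hmem : ∀ x ∈ S, x ∈ L)
    (h1 : ∀ x ∈ S, x ≠ 1) (hc : ∀ x ∈ S, ∀ y ∈ S, x ≠ y → x * y ≠ y * x) :
    S.card ≤ nc L := by
  classical
  have hcard : (S.subtype (· ∈ L)).card = S.card := by
    rw [Finset.card_subtype, Finset.filter_true_of_mem hmem]
  rw [← hcard]
  refine card_le_nc _ ?_ ?_
  · rintro ⟨x, hx⟩ hxS h1'
    exact h1 x (Finset.mem_subtype.1 hxS) (by simpa using congrArg Subtype.val h1')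
  · rintro ⟨x, hx⟩ hxS ⟨y, hy⟩ hyS hne heq
    refine hc x (Finset.mem_subtype.1 hxS) y (Finset.mem_subtype.1 hyS)
      (fun h => hne (by simp [h])) ?_
    simpa using congrArg Subtype.val heq

lemma nc_subgroup_witness (L : Subgroup G) : ∃ S : Finset G, S.card = nc L ∧
    (∀ x ∈ S, x ∈ L) ∧ (∀ x ∈ S, x ≠ 1) ∧
    ∀ x ∈ S, ∀ y ∈ S, x ≠ y → x * y ≠ y * x := by
  obtain ⟨T, hT, h1, hc⟩ := nc_exists (G := L)
  refine ⟨T.map ⟨Subtype.val, Subtype.val_injective⟩, by simpa using hT, ?_, ?_, ?_⟩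
  · rintro x hx
    obtain ⟨⟨y, hy⟩, -, rfl⟩ := Finset.mem_map.1 hx
    exact hy
  · rintro x hx
    obtain ⟨y, hyT, rfl⟩ := Finset.mem_map.1 hx
    exact fun h => h1 y hyT (Subtype.ext h)
  · rintro x hx y hy hne
    obtain ⟨a, haT, rfl⟩ := Finset.mem_map.1 hx
    obtain ⟨b, hbT, rfl⟩ := Finset.mem_map.1 hy
    intro h
    exact hc a haT b hbT (fun h' => hne (by rw [h'])) (Subtype.ext h)

end Basics

section Frob
variable {G : Type*} [Group G] (H K : Subgroup G)
variable (hfrob : ∀ g : G, g ∉ H → ∀ y : G, y ∈ H → g⁻¹ * y * g ∈ H → y = 1)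
variable (hKset : (K : Set G) =
      Set.univ \ ⋃ g : G, (fun x => g * x * g⁻¹) '' ((H : Set G) \ {1}))

include hfrob in
lemma L1 {a b y : G} (hy : y ≠ 1) (ha : a⁻¹ * y * a ∈ H) (hb : b⁻¹ * y * b ∈ H) :
    a⁻¹ * b ∈ H := by
  by_contra hg
  apply hy
  have key : (a⁻¹ * b)⁻¹ * (a⁻¹ * y * a) * (a⁻¹ * b) = b⁻¹ * y * b := by group
  have := hfrob (a⁻¹ * b) hg (a⁻¹ * y * a) ha (key ▸ hb)
  have : y = a * (a⁻¹ * y * a) * a⁻¹ := by group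
  rw [this]; simp [‹a⁻¹ * y * a = 1›]

include hKset in
lemma L2 {x a : G} (hx : x ∈ K) (hxa : a⁻¹ * x * a ∈ H) (h1 : x ≠ 1) : False := by
  have hxK : x ∈ (K : Set G) := hx
  rw [hKset] at hxK
  apply hxK.2
  refine Set.mem_iUnion.2 ⟨a, ⟨a⁻¹ * x * a, ⟨hxa, ?_⟩, by group⟩⟩
  simp only [Set.mem_singleton_iff]
  intro h
  apply h1
  have : x = a * (a⁻¹ * x * a) * a⁻¹ := by group
  rw [this, h]; group

include hKset in
lemma L5 {x : G} (hx : x ∉ K) : (∃ g, g⁻¹ * x * g ∈ H) ∧ x ≠ 1 := by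
  have hxK : x ∉ (K : Set G) := hx
  rw [hKset] at hxK
  have : x ∈ ⋃ g : G, (fun x => g * x * g⁻¹) '' ((H : Set G) \ {1}) := by
    by_contra h; exact hxK ⟨trivial, h⟩
  obtain ⟨g, h, ⟨hhH, hh1⟩, hgh⟩ := Set.mem_iUnion.1 this
  simp only at hgh
  constructor
  · refine ⟨g, ?_⟩
    have : g⁻¹ * x * g = h := by rw [← hgh]; group
    rw [this]; exact hhH
  · rintro rfl
    apply hh1
    simp only [Set.mem_singleton_iff]
    have : h = g⁻¹ * (g * h * g⁻¹) * g := by group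
    rw [this, hgh]; group

include hfrob hKset in
lemma L3 {x y a : G} (hx : x ∈ K) (hx1 : x ≠ 1) (hy1 : y ≠ 1) (hya : a⁻¹ * y * a ∈ H)
    (hKn : K.Normal) : x * y ≠ y * x := by
  intro hcomm
  have hxy : x⁻¹ * y * x = y := by
    rw [mul_assoc, ← hcomm]; group
  have h2 : (x * a)⁻¹ * y * (x * a) ∈ H := by
    have : (x * a)⁻¹ * y * (x * a) = a⁻¹ * (x⁻¹ * y * x) * a := by group
    rw [this, hxy]; exact hya
  have h3 : (x * a)⁻¹ * a ∈ H := L1 H hfrob hy1 h2 hya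
  have h4 : (x * a)⁻¹ * a = a⁻¹ * x⁻¹ * a := by group
  rw [h4] at h3
  have h5 : a⁻¹ * x⁻¹ * a ∈ K := by
    have := hKn.conj_mem x⁻¹ (inv_mem hx) a⁻¹
    simpa [mul_assoc] using this
  refine L2 H K hKset h5 (a := 1) (by simpa using h3) ?_
  intro h
  apply hx1
  have hx' : x⁻¹ = a * (a⁻¹ * x⁻¹ * a) * a⁻¹ := by group
  rw [h] at hx'
  simp only [mul_one] at hx'
  rw [← inv_inv x, hx']
  simp

include hfrob in
lemma L4 {x y a b : G} (hx1 : x ≠ 1) (hxa : a⁻¹ * x * a ∈ H) (hy1 : y ≠ 1)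
    (hyb : b⁻¹ * y * b ∈ H) (hab : a⁻¹ * b ∉ H) : x * y ≠ y * x := by
  intro hcomm
  have hxy : x⁻¹ * y * x = y := by rw [mul_assoc, ← hcomm]; group
  have h2 : (x * b)⁻¹ * y * (x * b) ∈ H := by
    have : (x * b)⁻¹ * y * (x * b) = b⁻¹ * (x⁻¹ * y * x) * b := by group
    rw [this, hxy]; exact hyb
  have h3 : (x * b)⁻¹ * b ∈ H := L1 H hfrob hy1 h2 hyb
  have h4 : b⁻¹ * x⁻¹ * b ∈ H := by
    have : (x * b)⁻¹ * b = b⁻¹ * x⁻¹ * b := by group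
    rwa [this] at h3
  have h5 : a⁻¹ * x⁻¹ * a ∈ H := by
    have : a⁻¹ * x⁻¹ * a = (a⁻¹ * x * a)⁻¹ := by group
    rw [this]; exact inv_mem hxa
  apply hab
  refine L1 H hfrob (y := x⁻¹) (by simpa using hx1) ?_ ?_
  · simpa [mul_assoc] using h5
  · simpa [mul_assoc] using h4

include hfrob hKset in
lemma cardK [Finite G] : Nat.card K = H.index := by
  classical
  have instG := Fintype.ofFinite G
  have instQ := Fintype.ofFinite (G ⧸ H)
  set φ : G ⧸ H → Finset G := fun q =>
    Finset.univ.filter (fun x => (Quotient.out q)⁻¹ * x * (Quotient.out q) ∈ H ∧ x ≠ 1)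
    with hφ
  have hdisj : ∀ q ∈ (Finset.univ : Finset (G ⧸ H)), ∀ q' ∈ Finset.univ, q ≠ q' →
      Disjoint (φ q) (φ q') := by
    intro q _ q' _ hne
    rw [Finset.disjoint_left]
    intro x hx hx'
    simp only [hφ, Finset.mem_filter] at hx hx'
    have := L1 H hfrob hx.2.2 hx.2.1 hx'.2.1
    apply hne
    rw [← Quotient.out_eq q, ← Quotient.out_eq q']
    exact (QuotientGroup.eq).2 this
  have hHF : (Finset.univ.filter (· ∈ H)).card = Nat.card H := by
    rw [Nat.card_eq_fintype_card]
    rw [Fintype.card_subtype]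
  have hcardφ : ∀ q : G ⧸ H, (φ q).card = Nat.card H - 1 := by
    intro q
    set g := Quotient.out q with hg
    have himg : φ q = ((Finset.univ.filter (· ∈ H)).erase 1).image
        (fun h => g * h * g⁻¹) := by
      ext x
      simp only [hφ, Finset.mem_filter, Finset.mem_image, Finset.mem_erase,
        Finset.mem_univ, true_and]
      constructor
      · rintro ⟨hxH, hx1⟩
        refine ⟨g⁻¹ * x * g, ⟨?_, hxH⟩, by group⟩
        intro h; apply hx1
        have : x = g * (g⁻¹ * x * g) * g⁻¹ := by group
        rw [this, h]; group
      · rintro ⟨h, ⟨h1, hH⟩, rfl⟩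
        constructor
        · have : g⁻¹ * (g * h * g⁻¹) * g = h := by group
          rw [this]; exact hH
        · intro he; apply h1
          have : h = g⁻¹ * (g * h * g⁻¹) * g := by group
          rw [this, he]; group
    rw [himg, Finset.card_image_of_injective _ (fun u v huv => by
      have : g⁻¹ * (g * u * g⁻¹) * g = g⁻¹ * (g * v * g⁻¹) * g := by rw [huv]
      simpa [mul_assoc] using this),
      Finset.card_erase_of_mem (by simp [H.one_mem]), hHF]
  have hunion : (Finset.univ : Finset G) =
      (Finset.univ.filter (· ∈ K)) ∪ (Finset.univ.biUnion φ) := by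
    ext x
    simp only [Finset.mem_univ, true_iff]
    rw [Finset.mem_union, Finset.mem_filter, Finset.mem_biUnion]
    by_cases hx : x ∈ K
    · exact Or.inl ⟨Finset.mem_univ x, hx⟩
    · right
      obtain ⟨⟨g, hg⟩, hx1⟩ := L5 H K hKset hx
      refine ⟨QuotientGroup.mk g, Finset.mem_univ _, ?_⟩
      rw [hφ, Finset.mem_filter]
      refine ⟨Finset.mem_univ x, ?_, hx1⟩
      set g' := Quotient.out (QuotientGroup.mk (s := H) g) with hg'
      have hgg' : g⁻¹ * g' ∈ H := by
        rw [← QuotientGroup.eq, hg']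
        exact (QuotientGroup.out_eq' _).symm
      have : g'⁻¹ * x * g' = (g⁻¹ * g')⁻¹ * (g⁻¹ * x * g) * (g⁻¹ * g') := by group
      rw [this]
      exact mul_mem (mul_mem (inv_mem hgg') hg) hgg'
  have hdisjKU : Disjoint (Finset.univ.filter (· ∈ K)) (Finset.univ.biUnion φ) := by
    rw [Finset.disjoint_left]
    intro x hx hx'
    obtain ⟨q, _, hq⟩ := Finset.mem_biUnion.1 hx'
    simp only [hφ, Finset.mem_filter] at hq hx
    exact L2 H K hKset hx.2 hq.2.1 hq.2.2
  have hcount : Fintype.card G = (Finset.univ.filter (· ∈ K)).card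
      + H.index * (Nat.card H - 1) := by
    conv_lhs => rw [← Finset.card_univ, hunion]
    rw [Finset.card_union_of_disjoint hdisjKU, Finset.card_biUnion hdisj]
    simp only [hcardφ, Finset.sum_const, Finset.card_univ, smul_eq_mul]
    congr 2
    rw [Subgroup.index, Nat.card_eq_fintype_card]
  have hKF : (Finset.univ.filter (· ∈ K)).card = Nat.card K := by
    rw [Nat.card_eq_fintype_card, Fintype.card_subtype]
  have hGcard : Fintype.card G = H.index * Nat.card H := by
    rw [← Nat.card_eq_fintype_card, ← H.index_mul_card]
  have hHpos : 1 ≤ Nat.card H := Nat.one_le_iff_ne_zero.2 (Nat.card_ne_zero.2 ⟨⟨1, H.one_mem⟩, inferInstance⟩)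
  have hsplit : H.index * Nat.card H = H.index * (Nat.card H - 1) + H.index := by
    obtain ⟨m, hm⟩ : ∃ m, Nat.card ↥H = m + 1 := ⟨Nat.card ↥H - 1, by omega⟩
    rw [hm, Nat.add_sub_cancel, Nat.mul_add, Nat.mul_one]
  rw [hGcard, hKF, hsplit] at hcount
  omega

end Frob

lemma card_le_nc_conj {G : Type*} [Group G] [Finite G] (H : Subgroup G) (g : G) (S : Finset G)
    (hmem : ∀ x ∈ S, g⁻¹ * x * g ∈ H) (h1 : ∀ x ∈ S, x ≠ 1)
    (hc : ∀ x ∈ S, ∀ y ∈ S, x ≠ y → x * y ≠ y * x) : S.card ≤ nc H := by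
  classical
  have hinj : Function.Injective (fun x : G => g⁻¹ * x * g) := by
    intro u v huv
    simp only at huv
    have : g * (g⁻¹ * u * g) * g⁻¹ = g * (g⁻¹ * v * g) * g⁻¹ := by rw [huv]
    calc u = g * (g⁻¹ * u * g) * g⁻¹ := by group
    _ = g * (g⁻¹ * v * g) * g⁻¹ := this
    _ = v := by group
  rw [← Finset.card_image_of_injective S hinj]
  refine card_le_nc_subgroup H _ ?_ ?_ ?_
  · intro x hx
    obtain ⟨a, ha, rfl⟩ := Finset.mem_image.1 hx
    exact hmem a ha
  · intro x hx
    obtain ⟨a, ha, rfl⟩ := Finset.mem_image.1 hx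
    intro h
    apply h1 a ha
    calc a = g * (g⁻¹ * a * g) * g⁻¹ := by group
    _ = 1 := by rw [h]; group
  · intro x hx y hy hne heq
    obtain ⟨a, ha, rfl⟩ := Finset.mem_image.1 hx
    obtain ⟨b, hb, rfl⟩ := Finset.mem_image.1 hy
    refine hc a ha b hb (fun h => hne (by rw [h])) ?_
    have e1 : g⁻¹ * a * g * (g⁻¹ * b * g) = g⁻¹ * (a * b) * g := by group
    have e2 : g⁻¹ * b * g * (g⁻¹ * a * g) = g⁻¹ * (b * a) * g := by group
    rw [e1, e2] at heq
    exact hinj heq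

/-- For a finite Frobenius group `G` with complement `H` and kernel `K`,
`nc(G) = nc(K) + |K| ⬝ nc(H)`. -/
theorem stmt_10 {G : Type*} [Group G] [Finite G] (H K : Subgroup G)
    (hHtop : H ≠ ⊤) (hHbot : H ≠ ⊥)
    (hfrob : ∀ g : G, g ∉ H → ∀ y : G, y ∈ H → g⁻¹ * y * g ∈ H → y = 1)
    (hKnormal : K.Normal)
    (hKset : (K : Set G) =
      Set.univ \ ⋃ g : G, (fun x => g * x * g⁻¹) '' ((H : Set G) \ {1})) :
    nc G = nc K + Nat.card K * nc H := by
  classical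
  have instG := Fintype.ofFinite G
  have instQ := Fintype.ofFinite (G ⧸ H)
  have hcardK : Nat.card K = H.index := cardK H K hfrob hKset
  have hKH : ∀ z : G, z ∈ K → z ∈ H → z = 1 := by
    intro z hzK hzH
    by_contra h
    exact L2 H K hKset hzK (a := 1) (by simpa using hzH) h
  refine le_antisymm ?_ ?_
  · -- upper bound
    obtain ⟨S, hScard, hS1, hSc⟩ := nc_exists (G := G)
    rw [← hScard]
    have hsplit : (S.filter (· ∈ K)).card + (S.filter (fun x => ¬ x ∈ K)).card = S.card :=
      Finset.card_filter_add_card_filter_not (fun x => x ∈ K)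
    rw [← hsplit]
    have h1le : (S.filter (· ∈ K)).card ≤ nc K := by
      refine card_le_nc_subgroup K _ (fun x hx => (Finset.mem_filter.1 hx).2)
        (fun x hx => hS1 x (Finset.mem_filter.1 hx).1) ?_
      intro x hx y hy
      exact hSc x (Finset.mem_filter.1 hx).1 y (Finset.mem_filter.1 hy).1
    have h2le : (S.filter (fun x => ¬ x ∈ K)).card ≤ Nat.card K * nc H := by
      set S2 := S.filter (fun x => ¬ x ∈ K) with hS2
      set cl : G → G ⧸ H := fun x =>
        if hx : ∃ g : G, g⁻¹ * x * g ∈ H then QuotientGroup.mk (Classical.choose hx)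
        else QuotientGroup.mk 1 with hcl
      have key : ∀ q : G ⧸ H, ∀ x ∈ S2, cl x = q →
          (Quotient.out q)⁻¹ * x * (Quotient.out q) ∈ H := by
        intro q x hx hclx
        have hxK : x ∉ K := (Finset.mem_filter.1 hx).2
        obtain ⟨hex, hx1⟩ := L5 H K hKset hxK
        rw [hcl] at hclx
        simp only [dif_pos hex] at hclx
        set g := Classical.choose hex with hg
        have hgspec : g⁻¹ * x * g ∈ H := Classical.choose_spec hex
        have hgq : g⁻¹ * (Quotient.out q) ∈ H := by
          rw [← QuotientGroup.eq, hclx]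
          exact (QuotientGroup.out_eq' _).symm
        have : (Quotient.out q)⁻¹ * x * (Quotient.out q)
            = (g⁻¹ * Quotient.out q)⁻¹ * (g⁻¹ * x * g) * (g⁻¹ * Quotient.out q) := by group
        rw [this]
        exact mul_mem (mul_mem (inv_mem hgq) hgspec) hgq
      have hfib : S2.card = ∑ q : G ⧸ H, (S2.filter (fun x => cl x = q)).card :=
        Finset.card_eq_sum_card_fiberwise (fun x _ => Finset.mem_univ (cl x))
      rw [hfib]
      have hbound : ∀ q : G ⧸ H, (S2.filter (fun x => cl x = q)).card ≤ nc H := by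
        intro q
        refine card_le_nc_conj H (Quotient.out q) _ ?_ ?_ ?_
        · intro x hx
          exact key q x (Finset.mem_filter.1 hx).1 (Finset.mem_filter.1 hx).2
        · intro x hx
          exact hS1 x (Finset.mem_filter.1 (Finset.mem_filter.1 hx).1).1
        · intro x hx y hy
          exact hSc x (Finset.mem_filter.1 (Finset.mem_filter.1 hx).1).1 y
            (Finset.mem_filter.1 (Finset.mem_filter.1 hy).1).1
      calc ∑ q : G ⧸ H, (S2.filter (fun x => cl x = q)).card
          ≤ ∑ _q : G ⧸ H, nc H := Finset.sum_le_sum (fun q _ => hbound q)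
        _ = Fintype.card (G ⧸ H) * nc H := by
            rw [Finset.sum_const, Finset.card_univ, smul_eq_mul]
        _ = Nat.card K * nc H := by
            rw [hcardK, Subgroup.index, Nat.card_eq_fintype_card]
    omega
  · -- lower bound
    obtain ⟨SK, hSKcard, hSKmem, hSK1, hSKc⟩ := nc_subgroup_witness K
    obtain ⟨SH, hSHcard, hSHmem, hSH1, hSHc⟩ := nc_subgroup_witness H
    set KF := Finset.univ.filter (· ∈ K) with hKFdef
    have hKFcard : KF.card = Nat.card K := by
      rw [hKFdef, Nat.card_eq_fintype_card, Fintype.card_subtype]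
    set B := KF.biUnion (fun k => SH.image (fun h => k * h * k⁻¹)) with hBdef
    have hBspec : ∀ x ∈ B, ∃ k ∈ K, ∃ h ∈ SH, x = k * h * k⁻¹ := by
      intro x hx
      obtain ⟨k, hk, hx'⟩ := Finset.mem_biUnion.1 hx
      obtain ⟨h, hh, rfl⟩ := Finset.mem_image.1 hx'
      exact ⟨k, (Finset.mem_filter.1 hk).2, h, hh, rfl⟩
    have hconj_ne : ∀ (k h : G), h ∈ SH → k * h * k⁻¹ ≠ 1 := by
      intro k h hh he
      apply hSH1 h hh
      calc h = k⁻¹ * (k * h * k⁻¹) * k := by group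
      _ = 1 := by rw [he]; group
    have hconjH : ∀ (k h : G), h ∈ SH → k⁻¹ * (k * h * k⁻¹) * k ∈ H := by
      intro k h hh
      have : k⁻¹ * (k * h * k⁻¹) * k = h := by group
      rw [this]; exact hSHmem h hh
    have hdisjB : ∀ k ∈ KF, ∀ k' ∈ KF, k ≠ k' →
        Disjoint (SH.image (fun h => k * h * k⁻¹)) (SH.image (fun h => k' * h * k'⁻¹)) := by
      intro k hk k' hk' hne
      rw [Finset.disjoint_left]
      intro x hx hx'
      obtain ⟨h, hh, rfl⟩ := Finset.mem_image.1 hx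
      obtain ⟨h', hh', he⟩ := Finset.mem_image.1 hx'
      have h1 : k⁻¹ * (k * h * k⁻¹) * k ∈ H := hconjH k h hh
      have h2 : k'⁻¹ * (k * h * k⁻¹) * k' ∈ H := by rw [← he]; exact hconjH k' h' hh'
      have hmem := L1 H hfrob (hconj_ne k h hh) h1 h2
      apply hne
      have : k⁻¹ * k' ∈ K := mul_mem (inv_mem (Finset.mem_filter.1 hk).2)
        (Finset.mem_filter.1 hk').2
      have h0 := hKH _ this hmem
      calc k = k * (k⁻¹ * k') := by rw [h0]; group
      _ = k' := by group
    have hinjconj : ∀ k : G, Function.Injective (fun h : G => k * h * k⁻¹) := by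
      intro k u v huv
      simp only at huv
      calc u = k⁻¹ * (k * u * k⁻¹) * k := by group
      _ = k⁻¹ * (k * v * k⁻¹) * k := by rw [huv]
      _ = v := by group
    have hBcard : B.card = Nat.card K * nc H := by
      rw [hBdef, Finset.card_biUnion hdisjB]
      have : ∀ k ∈ KF, (SH.image (fun h => k * h * k⁻¹)).card = nc H := by
        intro k _
        rw [Finset.card_image_of_injective _ (hinjconj k), hSHcard]
      rw [Finset.sum_congr rfl this, Finset.sum_const, smul_eq_mul, hKFcard]
    have hdisjSKB : Disjoint SK B := by
      rw [Finset.disjoint_left]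
      intro x hx hx'
      obtain ⟨k, hkK, h, hh, rfl⟩ := hBspec x hx'
      exact L2 H K hKset (hSKmem _ hx) (hconjH k h hh) (hconj_ne k h hh)
    have hScard : (SK ∪ B).card = nc K + Nat.card K * nc H := by
      rw [Finset.card_union_of_disjoint hdisjSKB, hSKcard, hBcard]
    rw [← hScard]
    refine card_le_nc (SK ∪ B) ?_ ?_
    · intro x hx
      rcases Finset.mem_union.1 hx with hx | hx
      · exact hSK1 x hx
      · obtain ⟨k, hkK, h, hh, rfl⟩ := hBspec x hx
        exact hconj_ne k h hh
    · intro x hx y hy hne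
      rcases Finset.mem_union.1 hx with hx | hx <;> rcases Finset.mem_union.1 hy with hy | hy
      · exact hSKc x hx y hy hne
      · obtain ⟨k, hkK, h, hh, rfl⟩ := hBspec y hy
        exact L3 H K hfrob hKset (hSKmem x hx) (hSK1 x hx) (hconj_ne k h hh)
          (hconjH k h hh) hKnormal
      · obtain ⟨k, hkK, h, hh, rfl⟩ := hBspec x hx
        intro he
        exact L3 H K hfrob hKset (hSKmem y hy) (hSK1 y hy) (hconj_ne k h hh)
          (hconjH k h hh) hKnormal he.symm
      · obtain ⟨k, hkK, a, ha, rfl⟩ := hBspec x hx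
        obtain ⟨k', hk'K, b, hb, rfl⟩ := hBspec y hy
        by_cases hkk' : k⁻¹ * k' ∈ H
        · have h0 := hKH _ (mul_mem (inv_mem hkK) hk'K) hkk'
          have hkeq : k' = k := by
            calc k' = k * (k⁻¹ * k') := by group
            _ = k := by rw [h0]; group
          subst hkeq
          intro he
          have hab : a ≠ b := by
            intro h'; exact hne (by rw [h'])
          apply hSHc a ha b hb hab
          have e1 : k' * a * k'⁻¹ * (k' * b * k'⁻¹) = k' * (a * b) * k'⁻¹ := by group
          have e2 : k' * b * k'⁻¹ * (k' * a * k'⁻¹) = k' * (b * a) * k'⁻¹ := by group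
          rw [e1, e2] at he
          exact hinjconj k' he
        · exact L4 H hfrob (hconj_ne k a ha) (hconjH k a ha) (hconj_ne k' b hb)
            (hconjH k' b hb) hkk'
end

section
/- Let G be a finite nonabelian TC-group, i.e., for all noncentral g, h, k, if g commutes with h and h commutes with k then g commutes with k. Then every maximal non-commuting set of noncentral elements of G has the same size, namely the number n of distinct subgroups arising as centralizers of noncentral elements of G; in particular nc(G) = n. Moreover, the maximal non-commuting sets of noncentral elements are exactly the sets obtained by choosing one element from each centralizer class. -/
lemma comm_iff_cent {G : Type*} [Group G]
    (htc : ∀ g h k : G, g ∉ Subgroup.center G → h ∉ Subgroup.center G →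
      k ∉ Subgroup.center G → g * h = h * g → h * k = k * h → g * k = k * g)
    {x y : G} (hx : x ∉ Subgroup.center G) (hy : y ∉ Subgroup.center G) :
    x * y = y * x ↔ Subgroup.centralizer {x} = Subgroup.centralizer ({y} : Set G) := by
  constructor
  · intro h
    ext z
    simp only [Subgroup.mem_centralizer_iff, Set.mem_singleton_iff, forall_eq]
    by_cases hz : z ∈ Subgroup.center G
    · exact ⟨fun _ => Subgroup.mem_center_iff.mp hz y, fun _ => Subgroup.mem_center_iff.mp hz x⟩
    · constructor
      · intro hzx
        exact (htc z x y hz hx hy hzx.symm h).symm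
      · intro hzy
        exact (htc z y x hz hy hx hzy.symm h.symm).symm
  · intro h
    have hy' : y ∈ Subgroup.centralizer ({y} : Set G) := by
      simp [Subgroup.mem_centralizer_iff]
    rw [← h] at hy'
    exact Subgroup.mem_centralizer_iff.mp hy' x rfl

/-- In a finite nonabelian TC-group, every maximal non-commuting set of
noncentral elements has size equal to the number `n` of distinct centralizers of
noncentral elements, `nc(G) = n`, and the maximal non-commuting sets of
noncentral elements are exactly the sets choosing one element from each
centralizer class. -/
theorem stmt_17 {G : Type*} [Group G] [Finite G]
    (hna : ∃ a b : G, a * b ≠ b * a)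
    (htc : ∀ g h k : G, g ∉ Subgroup.center G → h ∉ Subgroup.center G →
      k ∉ Subgroup.center G → g * h = h * g → h * k = k * h → g * k = k * g) :
    (∀ S : Finset G, (∀ x ∈ S, x ∉ Subgroup.center G) →
      (∀ x ∈ S, ∀ y ∈ S, x ≠ y → x * y ≠ y * x) →
      (∀ y : G, y ∉ Subgroup.center G → y ∉ S → ∃ x ∈ S, x * y = y * x) →
      S.card = Set.ncard {H : Subgroup G |
        ∃ x, x ∉ Subgroup.center G ∧ Subgroup.centralizer {x} = H}) ∧
    (nc G = Set.ncard {H : Subgroup G |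
        ∃ x, x ∉ Subgroup.center G ∧ Subgroup.centralizer {x} = H}) ∧
    (∀ S : Finset G, (∀ x ∈ S, x ∉ Subgroup.center G) →
      (((∀ x ∈ S, ∀ y ∈ S, x ≠ y → x * y ≠ y * x) ∧
        (∀ y : G, y ∉ Subgroup.center G → y ∉ S → ∃ x ∈ S, x * y = y * x)) ↔
       (∀ H : Subgroup G,
         (∃ x, x ∉ Subgroup.center G ∧ Subgroup.centralizer {x} = H) →
         ∃! x, x ∈ S ∧ Subgroup.centralizer {x} = H))) := by
  classical
  have := Fintype.ofFinite G
  set CS : Set (Subgroup G) :=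
    {H : Subgroup G | ∃ x, x ∉ Subgroup.center G ∧ Subgroup.centralizer {x} = H} with hCS
  have hCSfin : CS.Finite := Set.toFinite _
  -- Part 1
  have part1 : ∀ S : Finset G, (∀ x ∈ S, x ∉ Subgroup.center G) →
      (∀ x ∈ S, ∀ y ∈ S, x ≠ y → x * y ≠ y * x) →
      (∀ y : G, y ∉ Subgroup.center G → y ∉ S → ∃ x ∈ S, x * y = y * x) →
      S.card = CS.ncard := by
    intro S hnc hpair hmax
    have himg : CS = ↑(S.image fun x => Subgroup.centralizer ({x} : Set G)) := by
      ext H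
      simp only [hCS, Set.mem_setOf_eq, Finset.coe_image, Set.mem_image, Finset.mem_coe]
      constructor
      · rintro ⟨y, hy, rfl⟩
        by_cases hyS : y ∈ S
        · exact ⟨y, hyS, rfl⟩
        · obtain ⟨x, hxS, hxy⟩ := hmax y hy hyS
          exact ⟨x, hxS, (comm_iff_cent htc (hnc x hxS) hy).mp hxy⟩
      · rintro ⟨x, hxS, rfl⟩
        exact ⟨x, hnc x hxS, rfl⟩
    rw [himg, Set.ncard_coe_finset, Finset.card_image_of_injOn]
    intro x hx y hy hxy
    by_contra hne
    exact hpair x hx y hy hne ((comm_iff_cent htc (hnc x hx) (hnc y hy)).mpr hxy)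
  -- Part 3
  have part3 : ∀ S : Finset G, (∀ x ∈ S, x ∉ Subgroup.center G) →
      (((∀ x ∈ S, ∀ y ∈ S, x ≠ y → x * y ≠ y * x) ∧
        (∀ y : G, y ∉ Subgroup.center G → y ∉ S → ∃ x ∈ S, x * y = y * x)) ↔
       (∀ H : Subgroup G,
         (∃ x, x ∉ Subgroup.center G ∧ Subgroup.centralizer {x} = H) →
         ∃! x, x ∈ S ∧ Subgroup.centralizer {x} = H)) := by
    intro S hnc
    constructor
    · rintro ⟨hpair, hmax⟩ H ⟨y, hy, rfl⟩
      have hex : ∃ x ∈ S,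
          Subgroup.centralizer ({x} : Set G) = Subgroup.centralizer ({y} : Set G) := by
        by_cases hyS : y ∈ S
        · exact ⟨y, hyS, rfl⟩
        · obtain ⟨x, hxS, hxy⟩ := hmax y hy hyS
          exact ⟨x, hxS, (comm_iff_cent htc (hnc x hxS) hy).mp hxy⟩
      obtain ⟨x, hxS, hxc⟩ := hex
      refine ⟨x, ⟨hxS, hxc⟩, ?_⟩
      rintro z ⟨hzS, hzc⟩
      by_contra hne
      exact hpair z hzS x hxS hne
        ((comm_iff_cent htc (hnc z hzS) (hnc x hxS)).mpr (hzc.trans hxc.symm))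
    · intro hH
      constructor
      · intro x hx y hy hxy hcomm
        obtain ⟨z, _, huniq⟩ :=
          hH (Subgroup.centralizer ({x} : Set G)) ⟨x, hnc x hx, rfl⟩
        have e1 := huniq x ⟨hx, rfl⟩
        have e2 := huniq y ⟨hy, (comm_iff_cent htc (hnc y hy) (hnc x hx)).mp hcomm.symm⟩
        exact hxy (e1.trans e2.symm)
      · intro y hy hyS
        obtain ⟨x, ⟨hxS, hxc⟩, _⟩ :=
          hH (Subgroup.centralizer ({y} : Set G)) ⟨y, hy, rfl⟩
        exact ⟨x, hxS, (comm_iff_cent htc (hnc x hxS) hy).mpr hxc⟩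
  -- A canonical maximal set S₀
  let f : Subgroup G → G := fun H => if h : H ∈ CS then h.choose else 1
  have hf : ∀ H ∈ CS, f H ∉ Subgroup.center G ∧ Subgroup.centralizer {f H} = H := by
    intro H hH
    simp only [f, dif_pos hH]
    exact hH.choose_spec
  let S₀ : Finset G := hCSfin.toFinset.image f
  have hS₀nc : ∀ x ∈ S₀, x ∉ Subgroup.center G := by
    intro x hx
    simp only [S₀, Finset.mem_image, Set.Finite.mem_toFinset] at hx
    obtain ⟨H, hH, rfl⟩ := hx
    exact (hf H hH).1
  have hS₀key : ∀ H : Subgroup G,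
      (∃ x, x ∉ Subgroup.center G ∧ Subgroup.centralizer {x} = H) →
      ∃! x, x ∈ S₀ ∧ Subgroup.centralizer {x} = H := by
    intro H hH
    have hHCS : H ∈ CS := hH
    refine ⟨f H, ⟨Finset.mem_image_of_mem f (hCSfin.mem_toFinset.mpr hHCS), (hf H hHCS).2⟩, ?_⟩
    rintro z ⟨hzS, hzc⟩
    simp only [S₀, Finset.mem_image, Set.Finite.mem_toFinset] at hzS
    obtain ⟨H', hH', rfl⟩ := hzS
    have hHH : H' = H := by rw [← (hf H' hH').2, hzc]
    rw [hHH]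
  obtain ⟨hS₀pair, hS₀max⟩ := (part3 S₀ hS₀nc).mpr hS₀key
  have hS₀card : S₀.card = CS.ncard := part1 S₀ hS₀nc hS₀pair hS₀max
  -- ncard CS ≥ 2
  have hn2 : 2 ≤ CS.ncard := by
    obtain ⟨a, b, hab⟩ := hna
    have ha : a ∉ Subgroup.center G := fun h => hab (Subgroup.mem_center_iff.mp h b).symm
    have hb : b ∉ Subgroup.center G := fun h => hab (Subgroup.mem_center_iff.mp h a)
    have hne : Subgroup.centralizer ({a} : Set G) ≠ Subgroup.centralizer ({b} : Set G) :=
      fun h => hab ((comm_iff_cent htc ha hb).mpr h)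
    have hsub : {Subgroup.centralizer ({a} : Set G),
        Subgroup.centralizer ({b} : Set G)} ⊆ CS := by
      intro H hH
      simp only [Set.mem_insert_iff, Set.mem_singleton_iff] at hH
      rcases hH with rfl | rfl
      · exact ⟨a, ha, rfl⟩
      · exact ⟨b, hb, rfl⟩
    calc 2 = ({Subgroup.centralizer ({a} : Set G),
          Subgroup.centralizer ({b} : Set G)} : Set (Subgroup G)).ncard :=
        (Set.ncard_pair hne).symm
      _ ≤ CS.ncard := Set.ncard_le_ncard hsub hCSfin
  -- Part 2
  have part2 : nc G = CS.ncard := by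
    unfold nc
    apply le_antisymm
    · apply csSup_le
      · refine ⟨S₀.card, S₀, rfl, ?_, hS₀pair⟩
        intro x hx hx1
        exact hS₀nc x hx (hx1 ▸ Subgroup.one_mem _)
      · rintro m ⟨S, rfl, hS1, hSpair⟩
        by_cases hc : S.card ≤ 1
        · omega
        · push_neg at hc
          have hSnc : ∀ x ∈ S, x ∉ Subgroup.center G := by
            intro x hx hxc
            obtain ⟨y, hy, hyx⟩ := Finset.exists_mem_ne hc x
            exact hSpair x hx y hy (Ne.symm hyx) (Subgroup.mem_center_iff.mp hxc y).symm
          have hinj : Set.InjOn (fun x => Subgroup.centralizer ({x} : Set G)) ↑S := by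
            intro x hx y hy hxy
            by_contra hne
            exact hSpair x hx y hy hne
              ((comm_iff_cent htc (hSnc x hx) (hSnc y hy)).mpr hxy)
          calc S.card = (S.image fun x => Subgroup.centralizer ({x} : Set G)).card :=
              (Finset.card_image_of_injOn hinj).symm
            _ ≤ hCSfin.toFinset.card := by
                apply Finset.card_le_card
                intro H hH
                simp only [Finset.mem_image] at hH
                obtain ⟨x, hxS, rfl⟩ := hH
                exact hCSfin.mem_toFinset.mpr ⟨x, hSnc x hxS, rfl⟩
            _ = CS.ncard := (Set.ncard_eq_toFinset_card _ hCSfin).symm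
    · rw [← hS₀card]
      apply le_csSup
      · refine ⟨Fintype.card G, ?_⟩
        rintro m ⟨S, rfl, -, -⟩
        exact Finset.card_le_univ S
      · refine ⟨S₀, rfl, ?_, hS₀pair⟩
        intro x hx hx1
        exact hS₀nc x hx (hx1 ▸ Subgroup.one_mem _)
  exact ⟨part1, part2, part3⟩
end

section
/- Let G be a finite nonabelian TC-group, i.e., for all noncentral g, h, k ∈ G, if g commutes with h and h commutes with k then g commutes with k. Let m be the number of conjugacy classes of G. Then nc(G)·(nc(G)-1) + |G|·(|G|-m) - 2·(nc(G)-1)·(|G|-|Z(G)|) ≥ 0 as integers. -/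
/-!
In a TC-group commuting is an equivalence relation on the noncentral elements, and `nc G` is the
number `k` of its classes: a set of pairwise noncommuting elements meets each class at most once,
and class representatives form such a set. If `c₁, …, c_k ≥ 1` are the class sizes, then
`∑ cᵢ = |G| - |Z|`, and counting commuting pairs according to which coordinates are central gives
`m |G| = |G| |Z| + (|G| - |Z|) |Z| + ∑ cᵢ²`. The inequality thus becomes
`∑ cᵢ² + 2 (k - 1) ∑ cᵢ ≤ (∑ cᵢ)² + k (k - 1)`, i.e. `∑ (cᵢ - 1)² ≤ (∑ (cᵢ - 1))²`.
-/

open Finset Subgroup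

theorem Finset.sum_sq_add_le_of_one_le {ι R : Type*} [CommRing R] [PartialOrder R]
    [IsOrderedRing R] {s : Finset ι} {d : ι → R} (hd : ∀ i ∈ s, 1 ≤ d i) :
    ∑ i ∈ s, d i ^ 2 + 2 * (#s - 1) * ∑ i ∈ s, d i ≤ (∑ i ∈ s, d i) ^ 2 + #s * (#s - 1) := by
  have h := sum_sq_le_sq_sum_of_nonneg (s := s) (f := fun i => d i - 1)
    fun i hi => sub_nonneg.2 (hd i hi)
  simp only [sub_sq, sum_add_distrib, sum_sub_distrib, sum_const, ← sum_mul, ← mul_sum,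
    nsmul_eq_mul] at h
  linear_combination h

namespace Setoid
variable {α : Type*} (s : Setoid α)

theorem sum_card_fiber [Fintype (Quotient s)] [Finite α] :
    ∑ q : Quotient s, Nat.card {a // ⟦a⟧ = q} = Nat.card α := by
  rw [← Nat.card_sigma]
  exact Nat.card_congr (Equiv.sigmaFiberEquiv _)

theorem card_rel_eq_sum_card_fiber_sq [Fintype (Quotient s)] [Finite α] :
    Nat.card {p : α × α // s p.1 p.2} = ∑ q : Quotient s, Nat.card {a // ⟦a⟧ = q} ^ 2 := by
  classical
  have := Fintype.ofFinite α
  calc Nat.card {p : α × α // s p.1 p.2}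
      = ∑ a, Nat.card {b // (⟦b⟧ : Quotient s) = ⟦a⟧} := by
        rw [← Nat.card_sigma]
        refine Nat.card_congr ((Equiv.subtypeProdEquivSigmaSubtype fun a b => s a b).trans
          (Equiv.sigmaCongrRight fun a => Equiv.subtypeEquivRight fun b => ?_))
        rw [Quotient.eq]
        exact ⟨s.symm, s.symm⟩
    _ = ∑ q : Quotient s, ∑ _a : {a // ⟦a⟧ = q}, Nat.card {b // ⟦b⟧ = q} :=
        (Fintype.sum_fiberwise' _ fun q => Nat.card {b // ⟦b⟧ = q}).symm
    _ = ∑ q : Quotient s, Nat.card {a // ⟦a⟧ = q} ^ 2 := by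
        simp [sq, Nat.card_eq_fintype_card]

end Setoid

section CommutingPairs
variable {G : Type*} [Group G] [Finite G]

theorem card_commute_eq_card_center_add (x : G) :
    Nat.card {y // Commute x y} =
      Nat.card (center G) + Nat.card {y : {y : G // y ∉ center G} // Commute x y} := by
  classical
  rw [Nat.card_congr (Equiv.sumCompl fun y : {y // Commute x y} => (y : G) ∈ center G).symm,
    Nat.card_sum]
  congr 1
  · exact Nat.card_congr (Equiv.subtypeSubtypeEquivSubtype fun hy => mem_center_iff.1 hy x)
  · exact Nat.card_congr
      ((Equiv.subtypeSubtypeEquivSubtypeInter (Commute x) (· ∉ center G)).trans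
        ((Equiv.subtypeEquivRight fun _ => and_comm).trans
          (Equiv.subtypeSubtypeEquivSubtypeInter (· ∉ center G) (Commute x)).symm))

theorem card_commute_prod_eq {α : Type*} [Finite α] (f : α → G) :
    Nat.card {p : α × G // Commute (f p.1) p.2} =
      Nat.card α * Nat.card (center G) +
        Nat.card {p : α × {y : G // y ∉ center G} // Commute (f p.1) p.2} := by
  have := Fintype.ofFinite α
  rw [Nat.card_congr (Equiv.subtypeProdEquivSigmaSubtype fun a y => Commute (f a) y),
    Nat.card_congr (Equiv.subtypeProdEquivSigmaSubtype fun a (y : {y : G // y ∉ center G}) =>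
      Commute (f a) y), Nat.card_sigma, Nat.card_sigma]
  simp only [card_commute_eq_card_center_add, sum_add_distrib, sum_const, card_univ,
    smul_eq_mul, Nat.card_eq_fintype_card]

theorem card_conjClasses_mul_card_eq :
    Nat.card (ConjClasses G) * Nat.card G =
      Nat.card G * Nat.card (center G) + Nat.card {x : G // x ∉ center G} * Nat.card (center G) +
        Nat.card {p : {x : G // x ∉ center G} × {x : G // x ∉ center G} //
          Commute (p.1 : G) p.2} := by
  rw [← card_comm_eq_card_conjClasses_mul_card, add_assoc, ← card_commute_prod_eq Subtype.val]
  refine (card_commute_prod_eq id).trans (congrArg _ (Nat.card_congr ?_))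
  exact Equiv.subtypeEquiv (p := fun p : G × {y : G // y ∉ center G} => Commute p.1 p.2)
    (q := fun p => Commute (p.1 : G) p.2) (Equiv.prodComm _ _) fun _ => Commute.symm_iff

theorem card_center_add_card_noncentral :
    Nat.card (center G) + Nat.card {x : G // x ∉ center G} = Nat.card G := by
  classical
  rw [← Nat.card_sum]
  exact Nat.card_congr (Equiv.sumCompl _)

end CommutingPairs

/-- `G` is a TC-group. -/
def IsCommTransitive (G : Type*) [Group G] : Prop :=
  ∀ g h k : G, g ∉ center G → h ∉ center G → k ∉ center G →
    g * h = h * g → h * k = k * h → g * k = k * g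

namespace IsCommTransitive
variable {G : Type*} [Group G] (htc : IsCommTransitive G)

def commuteSetoid : Setoid {x : G // x ∉ center G} where
  r x y := Commute (x : G) y
  iseqv := ⟨fun _ => Commute.refl _, Commute.symm,
    fun {x y z} hxy hyz => htc x y z x.2 y.2 z.2 hxy hyz⟩

variable [Finite G]

theorem card_le_of_pairwise_not_commute (hna : ∃ a b : G, a * b ≠ b * a) {S : Finset G}
    (hS : ∀ x ∈ S, ∀ y ∈ S, x ≠ y → x * y ≠ y * x) :
    #S ≤ Nat.card (Quotient htc.commuteSetoid) := by
  obtain ⟨a, b, hab⟩ := hna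
  have ha : a ∉ center G := fun h => hab (mem_center_iff.1 h b).symm
  have : Nonempty (Quotient htc.commuteSetoid) := ⟨⟦⟨a, ha⟩⟧⟩
  rcases le_or_gt #S 1 with hS1 | hS2
  · exact hS1.trans Nat.card_pos
  have hS_noncentral : ∀ x ∈ S, x ∉ center G := fun x hx hxZ =>
    let ⟨y, hy, hyx⟩ := S.exists_mem_ne hS2 x
    hS y hy x hx hyx (mem_center_iff.1 hxZ y)
  rw [← Nat.card_eq_finsetCard]
  refine Nat.card_le_card_of_injective (fun x : S => ⟦⟨x, hS_noncentral x x.2⟩⟧)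
    fun x y hxy => ?_
  by_contra hne
  exact hS x x.2 y y.2 (Subtype.coe_ne_coe.2 hne) (Quotient.exact hxy)

theorem exists_pairwise_not_commute_card_eq : ∃ S : Finset G,
    #S = Nat.card (Quotient htc.commuteSetoid) ∧ (∀ x ∈ S, x ≠ 1) ∧
      ∀ x ∈ S, ∀ y ∈ S, x ≠ y → x * y ≠ y * x := by
  classical
  have := Fintype.ofFinite (Quotient htc.commuteSetoid)
  refine ⟨univ.image fun q : Quotient htc.commuteSetoid => (q.out : G), ?_, ?_, ?_⟩
  · rw [card_image_of_injective _ fun q q' h => Quotient.out_inj.1 (Subtype.ext h), card_univ,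
      Fintype.card_eq_nat_card]
  · rintro _ hx rfl
    obtain ⟨q, -, hq⟩ := mem_image.1 hx
    exact q.out.2 (hq ▸ one_mem _)
  · simp only [mem_image, mem_univ, true_and]
    rintro _ ⟨q, rfl⟩ _ ⟨q', rfl⟩ hne hc
    obtain rfl : q = q' := Quotient.out_equiv_out.1 hc
    exact hne rfl

theorem nc_eq_card_quotient (hna : ∃ a b : G, a * b ≠ b * a) :
    nc G = Nat.card (Quotient htc.commuteSetoid) :=
  IsGreatest.csSup_eq ⟨htc.exists_pairwise_not_commute_card_eq, by
    rintro n ⟨S, rfl, -, hS⟩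
    exact htc.card_le_of_pairwise_not_commute hna hS⟩

end IsCommTransitive

/-- For a finite nonabelian TC-group `G` with `m` conjugacy classes:
`nc(G)(nc(G)-1) + |G|(|G|-m) - 2(nc(G)-1)(|G|-|Z(G)|) ≥ 0`. -/
theorem stmt_19 {G : Type*} [Group G] [Finite G]
    (hna : ∃ a b : G, a * b ≠ b * a)
    (htc : ∀ g h k : G, g ∉ Subgroup.center G → h ∉ Subgroup.center G →
      k ∉ Subgroup.center G → g * h = h * g → h * k = k * h → g * k = k * g) :
    0 ≤ (nc G : ℤ) * ((nc G : ℤ) - 1) +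
        (Nat.card G : ℤ) * ((Nat.card G : ℤ) - (Nat.card (ConjClasses G) : ℤ)) -
        2 * ((nc G : ℤ) - 1) * ((Nat.card G : ℤ) - (Nat.card (Subgroup.center G) : ℤ)) := by
  set s := IsCommTransitive.commuteSetoid htc
  have := Fintype.ofFinite (Quotient s)
  have hnc : nc G = #(univ : Finset (Quotient s)) := by
    rw [card_univ, Fintype.card_eq_nat_card]
    exact IsCommTransitive.nc_eq_card_quotient htc hna
  have hclass : Nat.card (ConjClasses G) * Nat.card G = Nat.card G * Nat.card (center G) +
      Nat.card {x : G // x ∉ center G} * Nat.card (center G) +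
        ∑ q : Quotient s, Nat.card {a // ⟦a⟧ = q} ^ 2 := by
    rw [card_conjClasses_mul_card_eq, ← s.card_rel_eq_sum_card_fiber_sq]
    rfl
  have hconv := sum_sq_add_le_of_one_le (s := univ)
    (d := fun q : Quotient s => (Nat.card {a // ⟦a⟧ = q} : ℤ)) fun q _ => by
      have : Nonempty {a // ⟦a⟧ = q} := ⟨⟨q.out, q.out_eq⟩⟩
      exact_mod_cast Nat.card_pos
  rw [← Nat.cast_sum, s.sum_card_fiber, ← hnc] at hconv
  have hcard : (Nat.card (center G) : ℤ) + Nat.card {x : G // x ∉ center G} = Nat.card G := by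
    exact_mod_cast card_center_add_card_noncentral
  zify at hclass
  -- once `m |G|` is eliminated, what remains is a multiple of `|Z| + N - |G|`
  linear_combination hconv + hclass +
    (Nat.card {x : G // x ∉ center G} + Nat.card G - 2 * (nc G - 1) : ℤ) * hcard
end
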